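/- There exists a constant C > 0 such that for all k ∈ ℤ with k ≠ 0, all t ≥ 0 and all η, ξ ∈ ℝ one has |m(t,k,η) − m(t,k,ξ)| ≤ C·|η−ξ|/|k|. -/

import Mathlib

open MeasureTheory Set intervalIntegral

/-- `F(t,k,η) := ⨆_{j ∈ ℤ, j ≠ 0} 10/((1+(η/j − t)²)·⟨k−j⟩³)` with `⟨x⟩ := √(1+x²)`,
so `⟨k−j⟩³ = (1+(k−j)²)^{3/2}`. -/
noncomputable def F (t : ℝ) (k : ℤ) (η : ℝ) : ℝ :=
  ⨆ j : {j : ℤ // j ≠ 0},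
    10 / ((1 + (η / (j.1 : ℝ) - t) ^ 2) * (1 + ((k : ℝ) - (j.1 : ℝ)) ^ 2) ^ ((3 : ℝ) / 2))

/-- The Fourier weight `m(t,k,η) := exp(∫_0^t F(τ,k,η)·𝟙{√(k²+η²) ≤ 10τ²} dτ)`. -/
noncomputable def m (t : ℝ) (k : ℤ) (η : ℝ) : ℝ :=
  Real.exp (∫ τ in (0 : ℝ)..t,
    F τ k η * (if Real.sqrt ((k : ℝ) ^ 2 + η ^ 2) ≤ 10 * τ ^ 2 then 1 else 0))

abbrev J := {j : ℤ // j ≠ 0}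

instance : Nonempty J := ⟨⟨1, one_ne_zero⟩⟩

noncomputable def wt (x : ℝ) : ℝ := (1 + x ^ 2) ^ ((3 : ℝ) / 2)

noncomputable def g (k : ℤ) (θ : ℝ) (j : J) (τ : ℝ) : ℝ :=
  10 / ((1 + (θ / (j.1 : ℝ) - τ) ^ 2) * wt ((k : ℝ) - (j.1 : ℝ)))

lemma F_eq (τ : ℝ) (k : ℤ) (θ : ℝ) : F τ k θ = ⨆ j : J, g k θ j τ := rfl

lemma one_le_wt (x : ℝ) : 1 ≤ wt x := by
  have : (1:ℝ) ≤ 1 + x ^ 2 := by nlinarith [sq_nonneg x]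
  calc (1:ℝ) = 1 ^ ((3:ℝ)/2) := by simp
  _ ≤ (1 + x ^ 2) ^ ((3:ℝ)/2) := by
      apply Real.rpow_le_rpow (by norm_num) this (by norm_num)

lemma wt_pos (x : ℝ) : 0 < wt x := lt_of_lt_of_le one_pos (one_le_wt x)

lemma cube_le_wt (x : ℝ) : |x| ^ 3 ≤ wt x := by
  have h1 : |x| ^ (3:ℕ) = (x ^ 2) ^ ((3:ℝ)/2) := by
    rw [← Real.rpow_natCast (|x|) 3, ← sq_abs, ← Real.rpow_natCast (|x|) 2,
      ← Real.rpow_mul (abs_nonneg x)]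
    norm_num
  rw [h1]
  exact Real.rpow_le_rpow (sq_nonneg x) (by nlinarith) (by norm_num)

lemma denom_pos (k : ℤ) (θ : ℝ) (j : J) (τ : ℝ) :
    0 < (1 + (θ / (j.1 : ℝ) - τ) ^ 2) * wt ((k : ℝ) - (j.1 : ℝ)) := by
  have := wt_pos ((k : ℝ) - (j.1 : ℝ)); nlinarith [sq_nonneg (θ / (j.1 : ℝ) - τ)]

lemma g_nonneg (k : ℤ) (θ : ℝ) (j : J) (τ : ℝ) : 0 ≤ g k θ j τ :=
  div_nonneg (by norm_num) (le_of_lt (denom_pos k θ j τ))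

lemma g_le_wt (k : ℤ) (θ : ℝ) (j : J) (τ : ℝ) : g k θ j τ ≤ 10 / wt ((k : ℝ) - (j.1 : ℝ)) := by
  apply div_le_div_of_nonneg_left (by norm_num) (wt_pos _)
  nlinarith [wt_pos ((k : ℝ) - (j.1 : ℝ)), sq_nonneg (θ / (j.1 : ℝ) - τ)]

lemma g_le_ten (k : ℤ) (θ : ℝ) (j : J) (τ : ℝ) : g k θ j τ ≤ 10 :=
  le_trans (g_le_wt k θ j τ) (by
    rw [div_le_iff₀ (wt_pos _)]
    nlinarith [one_le_wt ((k : ℝ) - (j.1 : ℝ))])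

lemma g_eq_mul (k : ℤ) (θ : ℝ) (j : J) (τ : ℝ) :
    g k θ j τ = (10 / wt ((k : ℝ) - (j.1 : ℝ))) * (1 / (1 + (θ / (j.1 : ℝ) - τ) ^ 2)) := by
  unfold g; field_simp

lemma g_cont (k : ℤ) (θ : ℝ) (j : J) : Continuous (g k θ j) := by
  apply Continuous.div continuous_const
  · continuity
  · intro τ; exact ne_of_gt (denom_pos k θ j τ)

lemma F_nonneg (τ : ℝ) (k : ℤ) (θ : ℝ) : 0 ≤ F τ k θ := by
  rw [F_eq]; exact Real.iSup_nonneg fun j => g_nonneg k θ j τ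

lemma F_bddAbove (τ : ℝ) (k : ℤ) (θ : ℝ) : BddAbove (Set.range fun j : J => g k θ j τ) :=
  ⟨10, by rintro x ⟨j, rfl⟩; exact g_le_ten k θ j τ⟩

lemma F_le_ten (τ : ℝ) (k : ℤ) (θ : ℝ) : F τ k θ ≤ 10 := by
  rw [F_eq]; exact ciSup_le fun j => g_le_ten k θ j τ

lemma F_meas (k : ℤ) (θ : ℝ) : Measurable fun τ => F τ k θ := by
  simp only [F_eq]
  exact Measurable.iSup fun j => (g_cont k θ j).measurable

lemma sumNat3 : Summable (fun n : ℕ => 1 / ((n : ℝ)) ^ 3) :=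
  Real.summable_one_div_nat_pow.2 (by norm_num)

lemma wt_even (x : ℝ) : wt (-x) = wt x := by unfold wt; rw [neg_pow]; norm_num

lemma summable_one_div_wt_nat : Summable (fun n : ℕ => 1 / wt (n : ℝ)) := by
  rw [← summable_nat_add_iff 1]
  apply Summable.of_nonneg_of_le
    (fun n => div_nonneg zero_le_one (wt_pos _).le)
    (fun n => ?_) ((summable_nat_add_iff 1).2 sumNat3)
  have h1 : ((n + 1 : ℕ) : ℝ) ^ 3 ≤ wt ((n + 1 : ℕ) : ℝ) := by
    have := cube_le_wt ((n + 1 : ℕ) : ℝ)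
    rwa [abs_of_nonneg (by positivity)] at this
  apply div_le_div_of_nonneg_left (by norm_num) (by positivity) h1

lemma summable_one_div_wt_int : Summable (fun n : ℤ => 1 / wt (n : ℝ)) := by
  apply Summable.of_nat_of_neg
  · exact summable_one_div_wt_nat.congr (fun n => by norm_num)
  · apply summable_one_div_wt_nat.congr (fun n => ?_)
    push_cast
    rw [wt_even]

noncomputable def Ssum : ℝ := ∑' n : ℤ, 1 / wt (n : ℝ)
noncomputable def Zsum : ℝ := ∑' n : ℤ, |(n : ℝ)| ^ (-(3:ℝ))

lemma sumZ' : Summable (fun n : ℤ => |(n : ℝ)| ^ (-(3:ℝ))) :=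
  Real.summable_abs_int_rpow (by norm_num)

lemma one_le_Ssum : 1 ≤ Ssum := by
  have h0 : 1 / wt ((0 : ℤ) : ℝ) = 1 := by
    norm_num [wt]
  calc (1:ℝ) = 1 / wt ((0 : ℤ) : ℝ) := h0.symm
  _ ≤ Ssum := Summable.le_tsum summable_one_div_wt_int 0 (fun _ _ => div_nonneg zero_le_one (wt_pos _).le)

lemma Zsum_nonneg : 0 ≤ Zsum := tsum_nonneg (fun n => by positivity)

lemma summable_shift (k : ℤ) : Summable (fun j : ℤ => 1 / wt ((k : ℝ) - (j : ℝ))) := by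
  apply ((Equiv.subLeft k).summable_iff.2 summable_one_div_wt_int).congr
  intro j
  norm_num [Equiv.subLeft_apply]

lemma tsum_shift (k : ℤ) : ∑' j : ℤ, 1 / wt ((k : ℝ) - (j : ℝ)) = Ssum := by
  unfold Ssum
  rw [← (Equiv.subLeft k).tsum_eq (fun n : ℤ => 1 / wt (n : ℝ))]
  apply tsum_congr
  intro j
  simp only [Equiv.subLeft_apply]
  push_cast
  ring_nf

lemma summable_wt_sub (k : ℤ) : Summable (fun j : J => 1 / wt ((k : ℝ) - (j.1 : ℝ))) :=
  (summable_shift k).subtype _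

lemma tsum_wt_sub_le (k : ℤ) : ∑' j : J, 1 / wt ((k : ℝ) - (j.1 : ℝ)) ≤ Ssum := by
  rw [← tsum_shift k]
  exact Summable.tsum_le_tsum_of_inj (Subtype.val) Subtype.val_injective
    (fun c _ => div_nonneg zero_le_one (wt_pos _).le) (fun j => le_refl _)
    (summable_wt_sub k) (summable_shift k)

lemma summable_z_sub : Summable (fun j : J => |((j : ℤ) : ℝ)| ^ (-(3:ℝ))) :=
  sumZ'.subtype _

lemma tsum_z_sub_le : ∑' j : J, |((j : ℤ) : ℝ)| ^ (-(3:ℝ)) ≤ Zsum :=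
  Summable.tsum_le_tsum_of_inj (Subtype.val) Subtype.val_injective
    (fun c _ => by positivity) (fun j => le_refl _) summable_z_sub sumZ'

lemma rpow_neg3_eq (x : ℝ) : |x| ^ (-(3:ℝ)) = 1 / |x| ^ 3 := by
  rw [Real.rpow_neg (abs_nonneg x), ← Real.rpow_natCast |x| 3]
  norm_num

lemma cauchy_int_le (c t : ℝ) (ht : 0 ≤ t) :
    ∫ τ in Set.Ioc (0:ℝ) t, 1 / (1 + (c - τ) ^ 2) ≤ Real.pi := by
  rw [← intervalIntegral.integral_of_le ht]
  calc ∫ τ in (0:ℝ)..t, 1 / (1 + (c - τ) ^ 2)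
      = ∫ τ in (0:ℝ)..t, (fun x => 1 / (1 + x ^ 2)) (τ - c) := by
        apply intervalIntegral.integral_congr; intro τ _
        simp only; rw [show (c - τ)^2 = (τ - c)^2 by ring]
  _ = ∫ x in (0 - c)..(t - c), 1 / (1 + x ^ 2) :=
        intervalIntegral.integral_comp_sub_right (fun x => 1 / (1 + x ^ 2)) c
  _ = Real.arctan (t - c) - Real.arctan (0 - c) := integral_one_div_one_add_sq
  _ ≤ Real.pi := by
        have h2 := Real.arctan_lt_pi_div_two (t - c)
        have h3 := Real.neg_pi_div_two_lt_arctan (0 - c)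
        linarith

lemma integrableOn_of_bounded {f : ℝ → ℝ} {s : Set ℝ} (hvol : volume s ≠ ⊤)
    (hm : AEStronglyMeasurable f (volume.restrict s)) {c : ℝ} (hb : ∀ x, |f x| ≤ c) :
    IntegrableOn f s := by
  have hbc : IntegrableOn (fun _ => c) s volume :=
    integrableOn_const hvol
  exact Integrable.mono' hbc hm (ae_of_all _ hb)

lemma cauchy_cont (c : ℝ) : Continuous (fun τ : ℝ => 1 / (1 + (c - τ) ^ 2)) := by
  apply Continuous.div continuous_const (by continuity)
  intro τ; nlinarith [sq_nonneg (c - τ)]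

lemma cauchy_integrable (c : ℝ) (s : Set ℝ) (hvol : volume s ≠ ⊤) :
    IntegrableOn (fun τ => 1 / (1 + (c - τ) ^ 2)) s := by
  apply integrableOn_of_bounded hvol (cauchy_cont c).aestronglyMeasurable.restrict
  intro x
  rw [abs_of_nonneg (by positivity), div_le_one (by nlinarith [sq_nonneg (c - x)])]
  nlinarith [sq_nonneg (c - x)]

lemma ofReal_tsum_le {ι : Type*} [Countable ι] (u : ι → ℝ) (hu : ∀ j, 0 ≤ u j) :
    ENNReal.ofReal (∑' j, u j) ≤ ∑' j, ENNReal.ofReal (u j) := by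
  by_cases h : Summable u
  · exact le_of_eq (ENNReal.ofReal_tsum_of_nonneg hu h)
  · rw [tsum_eq_zero_of_not_summable h]
    simp

lemma tsum_dom {ι : Type*} [Countable ι] {t : ℝ} (H : ℝ → ℝ) (u : ι → ℝ → ℝ) (B : ι → ℝ)
    (Hint : IntegrableOn H (Set.Ioc 0 t))
    (Hnn : ∀ τ, 0 ≤ H τ)
    (Hle : ∀ τ ∈ Set.Ioc (0:ℝ) t, H τ ≤ ∑' j, u j τ)
    (umeas : ∀ j, Measurable (u j))
    (unn : ∀ j τ, 0 ≤ u j τ)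
    (uint : ∀ j, IntegrableOn (u j) (Set.Ioc 0 t))
    (uB : ∀ j, ∫ τ in Set.Ioc (0:ℝ) t, u j τ ≤ B j)
    (hB : Summable B) :
    ∫ τ in Set.Ioc (0:ℝ) t, H τ ≤ ∑' j, B j := by
  have Bnn : ∀ j, 0 ≤ B j := fun j =>
    le_trans (setIntegral_nonneg measurableSet_Ioc (fun τ _ => unn j τ)) (uB j)
  rw [← ENNReal.ofReal_le_ofReal_iff (tsum_nonneg Bnn)]
  have h1 : ENNReal.ofReal (∫ τ in Set.Ioc (0:ℝ) t, H τ)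
      = ∫⁻ τ in Set.Ioc (0:ℝ) t, ENNReal.ofReal (H τ) :=
    MeasureTheory.ofReal_integral_eq_lintegral_ofReal Hint (ae_of_all _ Hnn)
  rw [h1]
  have h2 : ∫⁻ τ in Set.Ioc (0:ℝ) t, ENNReal.ofReal (H τ)
      ≤ ∫⁻ τ in Set.Ioc (0:ℝ) t, ∑' j, ENNReal.ofReal (u j τ) := by
    apply lintegral_mono_ae
    rw [ae_restrict_iff' measurableSet_Ioc]
    apply ae_of_all
    intro τ hτ
    exact le_trans (ENNReal.ofReal_le_ofReal (Hle τ hτ)) (ofReal_tsum_le _ (fun j => unn j τ))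
  have h3 : ∫⁻ τ in Set.Ioc (0:ℝ) t, ∑' j, ENNReal.ofReal (u j τ)
      = ∑' j, ∫⁻ τ in Set.Ioc (0:ℝ) t, ENNReal.ofReal (u j τ) :=
    lintegral_tsum (fun j => ((umeas j).ennreal_ofReal).aemeasurable)
  have h4 : ∀ j, ∫⁻ τ in Set.Ioc (0:ℝ) t, ENNReal.ofReal (u j τ) ≤ ENNReal.ofReal (B j) := by
    intro j
    rw [← MeasureTheory.ofReal_integral_eq_lintegral_ofReal (uint j) (ae_of_all _ (unn j))]
    exact ENNReal.ofReal_le_ofReal (uB j)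
  calc ∫⁻ τ in Set.Ioc (0:ℝ) t, ENNReal.ofReal (H τ)
      ≤ ∑' j, ∫⁻ τ in Set.Ioc (0:ℝ) t, ENNReal.ofReal (u j τ) := h2.trans_eq h3
  _ ≤ ∑' j, ENNReal.ofReal (B j) := ENNReal.tsum_le_tsum h4
  _ = ENNReal.ofReal (∑' j, B j) := (ENNReal.ofReal_tsum_of_nonneg Bnn hB).symm

lemma cauchy_diff (u v : ℝ) :
    |1 / (1 + u ^ 2) - 1 / (1 + v ^ 2)|
      ≤ (|u - v| / 2) * (1 / (1 + u ^ 2) + 1 / (1 + v ^ 2)) := by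
  have hA : (0:ℝ) < 1 + u ^ 2 := by positivity
  have hB : (0:ℝ) < 1 + v ^ 2 := by positivity
  have h1 : 1 / (1 + u ^ 2) - 1 / (1 + v ^ 2) = (v ^ 2 - u ^ 2) / ((1 + u ^ 2) * (1 + v ^ 2)) := by
    field_simp
    ring
  rw [h1, abs_div, abs_of_pos (by positivity : (0:ℝ) < (1 + u ^ 2) * (1 + v ^ 2))]
  rw [div_le_iff₀ (by positivity)]
  have h2 : |v ^ 2 - u ^ 2| = |u - v| * |v + u| := by
    rw [← abs_mul, ← abs_neg]; congr 1; ring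
  rw [h2]
  have h3 : |v + u| ≤ ((1 + u ^ 2) + (1 + v ^ 2)) / 2 := by
    have := abs_add_le v u
    have hu : |u| ≤ (1 + u ^ 2) / 2 := by
      rw [abs_le]; constructor <;> nlinarith [sq_nonneg (u+1), sq_nonneg (u-1)]
    have hv : |v| ≤ (1 + v ^ 2) / 2 := by
      rw [abs_le]; constructor <;> nlinarith [sq_nonneg (v+1), sq_nonneg (v-1)]
    linarith
  calc |u - v| * |v + u| ≤ |u - v| * (((1 + u ^ 2) + (1 + v ^ 2)) / 2) :=
        mul_le_mul_of_nonneg_left h3 (abs_nonneg _)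
  _ = |u - v| / 2 * ((1 + u ^ 2) + (1 + v ^ 2)) := by ring
  _ = |u - v| / 2 * ((1 / (1 + u ^ 2) + 1 / (1 + v ^ 2)) * ((1 + u ^ 2) * (1 + v ^ 2))) := by
      congr 1
      field_simp
      ring
  _ = |u - v| / 2 * (1 / (1 + u ^ 2) + 1 / (1 + v ^ 2)) * ((1 + u ^ 2) * (1 + v ^ 2)) := by ring

lemma exp_diff {x y A : ℝ} (hx : x ≤ A) (hy : y ≤ A) :
    |Real.exp x - Real.exp y| ≤ Real.exp A * |x - y| := by
  wlog h : y ≤ x generalizing x y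
  · rw [abs_sub_comm, abs_sub_comm x y]; exact this hy hx (le_of_not_ge h)
  rw [abs_of_nonneg (sub_nonneg.2 (Real.exp_le_exp.2 h)), abs_of_nonneg (sub_nonneg.2 h)]
  have h1 : Real.exp y ≥ Real.exp x * (1 - (x - y)) := by
    have := Real.add_one_le_exp (y - x)
    calc Real.exp y = Real.exp x * Real.exp (y - x) := by rw [← Real.exp_add]; ring_nf
    _ ≥ Real.exp x * (y - x + 1) := by
        apply mul_le_mul_of_nonneg_left this (Real.exp_nonneg x)
    _ = Real.exp x * (1 - (x - y)) := by ring
  have h2 : Real.exp x - Real.exp y ≤ Real.exp x * (x - y) := by nlinarith [Real.exp_nonneg x]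
  calc Real.exp x - Real.exp y ≤ Real.exp x * (x - y) := h2
  _ ≤ Real.exp A * (x - y) := mul_le_mul_of_nonneg_right (Real.exp_le_exp.2 hx) (by linarith)

lemma abs_le_sqrt_add {c x : ℝ} (hc : 0 ≤ c) : |x| ≤ Real.sqrt (c + x ^ 2) := by
  have hs := Real.sq_sqrt (by positivity : (0:ℝ) ≤ c + x ^ 2)
  have hn := Real.sqrt_nonneg (c + x ^ 2)
  nlinarith [sq_abs x, abs_nonneg x]

lemma sqrt_lip {c η ξ : ℝ} (hc : 0 ≤ c) :
    |Real.sqrt (c + η ^ 2) - Real.sqrt (c + ξ ^ 2)| ≤ |η - ξ| := by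
  have key : ∀ x y : ℝ, Real.sqrt (c + x ^ 2) ≤ Real.sqrt (c + y ^ 2) + |x - y| := by
    intro x y
    set s := Real.sqrt (c + y ^ 2) with hs_def
    have hs : s ^ 2 = c + y ^ 2 := Real.sq_sqrt (by positivity)
    have hsn : 0 ≤ s := Real.sqrt_nonneg _
    have hy : |y| ≤ s := abs_le_sqrt_add hc
    have hd : (0:ℝ) ≤ |x - y| := abs_nonneg _
    have h1 : c + x ^ 2 ≤ (s + |x - y|) ^ 2 := by
      have hxy : |x| ≤ |y| + |x - y| := by
        calc |x| = |y + (x - y)| := by ring_nf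
        _ ≤ |y| + |x - y| := abs_add_le _ _
      nlinarith [sq_abs x, sq_abs y, abs_nonneg x, abs_nonneg y]
    calc Real.sqrt (c + x ^ 2) ≤ Real.sqrt ((s + |x - y|) ^ 2) := Real.sqrt_le_sqrt h1
    _ = s + |x - y| := Real.sqrt_sq (by linarith)
  rw [abs_sub_le_iff]
  constructor
  · have := key η ξ; linarith
  · have := key ξ η; rw [abs_sub_comm]; linarith

lemma sqrt_gap {u v a b : ℝ} (huv : u ≤ v) (ha : a = Real.sqrt (u / 10))
    (hb : b = Real.sqrt (v / 10)) (hu : 0 ≤ u) (hapos : 0 < a) :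
    b - a ≤ (v - u) / (20 * a) := by
  have ha2 : a ^ 2 = u / 10 := ha ▸ Real.sq_sqrt (by linarith)
  have hb2 : b ^ 2 = v / 10 := hb ▸ Real.sq_sqrt (by linarith)
  have hab : a ≤ b := by rw [ha, hb]; exact Real.sqrt_le_sqrt (by linarith)
  rw [le_div_iff₀ (by linarith)]
  nlinarith

lemma int_abs_one_le {n : ℤ} (hn : n ≠ 0) : (1:ℝ) ≤ |(n:ℝ)| := by
  rw [← Int.cast_abs]
  exact_mod_cast Int.one_le_abs hn

lemma weight_pointwise {k j : ℤ} (hk : k ≠ 0) (hj : j ≠ 0) :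
    1 / (|(j:ℝ)| * wt ((k:ℝ) - (j:ℝ)))
      ≤ 2 / |(k:ℝ)| * (1 / wt ((k:ℝ) - (j:ℝ)) + 1 / |(j:ℝ)| ^ 3) := by
  set p := |(j:ℝ)| with hp
  set q := |(k:ℝ)| with hq
  set w := wt ((k:ℝ) - (j:ℝ)) with hw
  have hp1 : (1:ℝ) ≤ p := int_abs_one_le hj
  have hq1 : (1:ℝ) ≤ q := int_abs_one_le hk
  have hw1 : (1:ℝ) ≤ w := one_le_wt _
  have hwpos : (0:ℝ) < w := by linarith
  rcases le_or_gt q (2 * p) with hc | hc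
  · have h1 : 1 / (p * w) ≤ 2 / q * (1 / w) := by
      rw [div_mul_div_comm, mul_one, div_le_div_iff₀ (by positivity) (by positivity)]
      nlinarith
    calc 1 / (p * w) ≤ 2 / q * (1 / w) := h1
    _ ≤ 2 / q * (1 / w + 1 / p ^ 3) := by
        apply mul_le_mul_of_nonneg_left _ (by positivity)
        have : (0:ℝ) ≤ 1 / p ^ 3 := by positivity
        linarith
  · have habs : q - p ≤ |(k:ℝ) - (j:ℝ)| := abs_sub_abs_le_abs_sub _ _
    set x := |(k:ℝ) - (j:ℝ)| with hx
    have hxq : q / 2 ≤ x := by linarith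
    have hxp : p ≤ x := by linarith
    have hx3 : q / 2 * p ^ 2 ≤ x ^ 3 := by
      have hpp : p * p ≤ x * x := mul_le_mul hxp hxp (by linarith) (by linarith)
      have h4 : q / 2 * (p * p) ≤ x * (x * x) :=
        mul_le_mul hxq hpp (by nlinarith) (by linarith)
      nlinarith
    have hwx : q / 2 * p ^ 2 ≤ w := le_trans hx3 (cube_le_wt _)
    have h1 : 1 / (p * w) ≤ 1 / (p * (q / 2 * p ^ 2)) := by
      apply div_le_div_of_nonneg_left (by norm_num) (by positivity)
      apply mul_le_mul_of_nonneg_left hwx (by linarith)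
    have h2 : 1 / (p * (q / 2 * p ^ 2)) = 2 / q * (1 / p ^ 3) := by
      field_simp
    calc 1 / (p * w) ≤ 2 / q * (1 / p ^ 3) := by rw [← h2]; exact h1
    _ ≤ 2 / q * (1 / w + 1 / p ^ 3) := by
        apply mul_le_mul_of_nonneg_left _ (by positivity)
        have : (0:ℝ) ≤ 1 / w := by positivity
        linarith

lemma F_small {k : ℤ} (hk : k ≠ 0) (ξ τ a Rm : ℝ) (hapos : 0 < a) (haR : a ^ 2 = Rm / 10)
    (hRk : |(k:ℝ)| ≤ Rm) (hRk3 : Rm ≤ |(k:ℝ)| ^ 3) (hξ : |ξ| ≤ |(k:ℝ)| * a / 8)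
    (hτ : a ≤ τ) : F τ k ξ ≤ 178 / Rm := by
  have hq1 : (1:ℝ) ≤ |(k:ℝ)| := int_abs_one_le hk
  have hRm1 : (1:ℝ) ≤ Rm := le_trans hq1 hRk
  rw [F_eq]
  apply ciSup_le
  intro j
  set p := |(j.1:ℝ)| with hp
  have hp1 : (1:ℝ) ≤ p := int_abs_one_le j.2
  set q := |(k:ℝ)| with hq
  set w := wt ((k:ℝ) - (j.1:ℝ)) with hw
  have hw1 : (1:ℝ) ≤ w := one_le_wt _
  have hD1 : (1:ℝ) ≤ 1 + (ξ / (j.1:ℝ) - τ) ^ 2 := by nlinarith [sq_nonneg (ξ / (j.1:ℝ) - τ)]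
  rcases le_or_gt q (2 * p) with hc | hc
  · -- resonant j : use distance from ξ/j to τ
    have hxj : |ξ / (j.1:ℝ)| ≤ a / 4 := by
      rw [abs_div, ← hp]
      rw [div_le_iff₀ (by linarith)]
      calc |ξ| ≤ q * a / 8 := hξ
      _ ≤ (2 * p) * a / 8 := by
          apply div_le_div_of_nonneg_right _ (by norm_num)
          apply mul_le_mul_of_nonneg_right hc (by linarith)
      _ = a / 4 * p := by ring
    have hdist : 3 * a / 4 ≤ |ξ / (j.1:ℝ) - τ| := by
      have h0 : ξ / (j.1:ℝ) - τ ≤ a / 4 - τ := by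
        have := abs_le.1 hxj; linarith [this.2]
      have h1 : ξ / (j.1:ℝ) - τ ≤ -(3 * a / 4) := by linarith
      calc 3 * a / 4 ≤ -(ξ / (j.1:ℝ) - τ) := by linarith
      _ ≤ |ξ / (j.1:ℝ) - τ| := neg_le_abs _
    have hsq : (3 * a / 4) ^ 2 ≤ (ξ / (j.1:ℝ) - τ) ^ 2 := by
      rw [← sq_abs (ξ / (j.1:ℝ) - τ)]
      apply pow_le_pow_left₀ (by linarith) hdist
    have hD : 9 * Rm / 160 ≤ 1 + (ξ / (j.1:ℝ) - τ) ^ 2 := by nlinarith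
    have hDpos : (0:ℝ) < 1 + (ξ / (j.1:ℝ) - τ) ^ 2 := by linarith
    calc g k ξ j τ ≤ 10 / ((1 + (ξ / (j.1:ℝ) - τ) ^ 2) * 1) := by
          unfold g
          apply div_le_div_of_nonneg_left (by norm_num) (by rw [mul_one]; exact hDpos)
          apply mul_le_mul_of_nonneg_left hw1 (by linarith)
    _ = 10 / (1 + (ξ / (j.1:ℝ) - τ) ^ 2) := by rw [mul_one]
    _ ≤ 10 / (9 * Rm / 160) := by
          apply div_le_div_of_nonneg_left (by norm_num) (by positivity) hD
    _ ≤ 178 / Rm := by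
          rw [div_le_div_iff₀ (by positivity) (by positivity)]
          nlinarith
  · -- non-resonant j : k - j is large
    have habs : q - p ≤ |(k:ℝ) - (j.1:ℝ)| := abs_sub_abs_le_abs_sub _ _
    have hxq : q / 2 ≤ |(k:ℝ) - (j.1:ℝ)| := by linarith
    have hq3 : q ^ 3 / 8 ≤ w := by
      refine le_trans ?_ (cube_le_wt _)
      calc q ^ 3 / 8 = (q / 2) ^ 3 := by ring
      _ ≤ |(k:ℝ) - (j.1:ℝ)| ^ 3 := pow_le_pow_left₀ (by linarith) hxq 3
    calc g k ξ j τ ≤ 10 / (1 * w) := by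
          unfold g
          apply div_le_div_of_nonneg_left (by norm_num) (by rw [one_mul]; linarith)
          apply mul_le_mul_of_nonneg_right hD1 (by linarith)
    _ = 10 / w := by rw [one_mul]
    _ ≤ 10 / (q ^ 3 / 8) := by
          apply div_le_div_of_nonneg_left (by norm_num) (by positivity) hq3
    _ = 80 / q ^ 3 := by
          field_simp
          norm_num
    _ ≤ 178 / Rm := by
          rw [div_le_div_iff₀ (by positivity) (by positivity)]
          nlinarith

lemma abs_ciSup_diff (a b : J → ℝ) (hbA : BddAbove (Set.range a)) (hbB : BddAbove (Set.range b))
    (hsum : Summable (fun j => |a j - b j|)) :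
    |(⨆ j, a j) - ⨆ j, b j| ≤ ∑' j, |a j - b j| := by
  have hT : ∀ j, |a j - b j| ≤ ∑' j, |a j - b j| :=
    fun j => Summable.le_tsum hsum j (fun _ _ => abs_nonneg _)
  rw [abs_sub_le_iff]
  constructor
  · rw [sub_le_iff_le_add]
    apply ciSup_le
    intro j
    have h1 : a j - b j ≤ |a j - b j| := le_abs_self _
    have h2 : b j ≤ ⨆ i, b i := le_ciSup hbB j
    linarith [hT j]
  · rw [sub_le_iff_le_add]
    apply ciSup_le
    intro j
    have h1 : b j - a j ≤ |a j - b j| := by rw [abs_sub_comm]; exact le_abs_self _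
    have h2 : a j ≤ ⨆ i, a i := le_ciSup hbA j
    linarith [hT j]

lemma vol_Ioc_ne_top (t : ℝ) : volume (Set.Ioc (0:ℝ) t) ≠ ⊤ :=
  (measure_Ioc_lt_top).ne

lemma summable_g (k : ℤ) (θ τ : ℝ) : Summable (fun j : J => g k θ j τ) := by
  apply Summable.of_nonneg_of_le (fun j => g_nonneg k θ j τ) (fun j => g_le_wt k θ j τ)
  exact ((summable_wt_sub k).mul_left 10).congr (fun j => by rw [mul_one_div])

lemma F_le_tsum (τ : ℝ) (k : ℤ) (θ : ℝ) : F τ k θ ≤ ∑' j : J, g k θ j τ := by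
  rw [F_eq]
  exact ciSup_le (fun j => Summable.le_tsum (summable_g k θ τ) j (fun i _ => g_nonneg k θ i τ))

lemma g_integrableOn (k : ℤ) (θ : ℝ) (j : J) (t : ℝ) :
    IntegrableOn (g k θ j) (Set.Ioc 0 t) := by
  apply integrableOn_of_bounded (vol_Ioc_ne_top t) (g_cont k θ j).aestronglyMeasurable.restrict
  intro x
  rw [abs_of_nonneg (g_nonneg k θ j x)]
  exact g_le_ten k θ j x

lemma int_g_le (k : ℤ) (θ : ℝ) (j : J) {t : ℝ} (ht : 0 ≤ t) :
    ∫ τ in Set.Ioc (0:ℝ) t, g k θ j τ ≤ 10 * Real.pi * (1 / wt ((k:ℝ) - (j.1:ℝ))) := by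
  have h1 : ∀ τ, g k θ j τ = (10 / wt ((k:ℝ) - (j.1:ℝ))) * (1 / (1 + (θ / (j.1:ℝ) - τ) ^ 2)) :=
    g_eq_mul k θ j
  calc ∫ τ in Set.Ioc (0:ℝ) t, g k θ j τ
      = (10 / wt ((k:ℝ) - (j.1:ℝ))) * ∫ τ in Set.Ioc (0:ℝ) t, 1 / (1 + (θ / (j.1:ℝ) - τ) ^ 2) := by
        rw [← MeasureTheory.integral_const_mul]
        exact setIntegral_congr_fun measurableSet_Ioc (fun τ _ => h1 τ)
  _ ≤ (10 / wt ((k:ℝ) - (j.1:ℝ))) * Real.pi := by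
        apply mul_le_mul_of_nonneg_left (cauchy_int_le _ t ht)
        exact div_nonneg (by norm_num) (wt_pos _).le
  _ = 10 * Real.pi * (1 / wt ((k:ℝ) - (j.1:ℝ))) := by ring

lemma chi_meas (k : ℤ) (θ : ℝ) :
    Measurable (fun τ : ℝ => if Real.sqrt ((k : ℝ) ^ 2 + θ ^ 2) ≤ 10 * τ ^ 2 then (1:ℝ) else 0) := by
  apply Measurable.ite _ measurable_const measurable_const
  exact measurableSet_le measurable_const (by measurability)

lemma chi_nonneg (k : ℤ) (θ τ : ℝ) :
    0 ≤ (if Real.sqrt ((k : ℝ) ^ 2 + θ ^ 2) ≤ 10 * τ ^ 2 then (1:ℝ) else 0) := by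
  split <;> norm_num

lemma chi_le_one (k : ℤ) (θ τ : ℝ) :
    (if Real.sqrt ((k : ℝ) ^ 2 + θ ^ 2) ≤ 10 * τ ^ 2 then (1:ℝ) else 0) ≤ 1 := by
  split <;> norm_num

lemma Fchi_integrable (k : ℤ) (θ : ℝ) (t : ℝ) :
    IntegrableOn (fun τ => F τ k θ *
      (if Real.sqrt ((k : ℝ) ^ 2 + θ ^ 2) ≤ 10 * τ ^ 2 then (1:ℝ) else 0)) (Set.Ioc 0 t) := by
  apply integrableOn_of_bounded (vol_Ioc_ne_top t)
    (((F_meas k θ).mul (chi_meas k θ)).aestronglyMeasurable.restrict)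
  intro x
  rw [Pi.mul_apply, abs_mul, abs_of_nonneg (F_nonneg x k θ), abs_of_nonneg (chi_nonneg k θ x)]
  calc F x k θ * (if Real.sqrt ((k : ℝ) ^ 2 + θ ^ 2) ≤ 10 * x ^ 2 then (1:ℝ) else 0)
      ≤ 10 * 1 := mul_le_mul (F_le_ten x k θ) (chi_le_one k θ x) (chi_nonneg k θ x) (by norm_num)
  _ = 10 := by norm_num

lemma m_eq_exp {t : ℝ} (ht : 0 ≤ t) (k : ℤ) (θ : ℝ) :
    m t k θ = Real.exp (∫ τ in Set.Ioc (0:ℝ) t, F τ k θ *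
      (if Real.sqrt ((k : ℝ) ^ 2 + θ ^ 2) ≤ 10 * τ ^ 2 then (1:ℝ) else 0)) := by
  unfold m
  rw [intervalIntegral.integral_of_le ht]

lemma I_nonneg {t : ℝ} (k : ℤ) (θ : ℝ) :
    0 ≤ ∫ τ in Set.Ioc (0:ℝ) t, F τ k θ *
      (if Real.sqrt ((k : ℝ) ^ 2 + θ ^ 2) ≤ 10 * τ ^ 2 then (1:ℝ) else 0) :=
  setIntegral_nonneg measurableSet_Ioc
    (fun τ _ => mul_nonneg (F_nonneg τ k θ) (chi_nonneg k θ τ))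

lemma I_le_A {t : ℝ} (ht : 0 ≤ t) (k : ℤ) (θ : ℝ) :
    (∫ τ in Set.Ioc (0:ℝ) t, F τ k θ *
      (if Real.sqrt ((k : ℝ) ^ 2 + θ ^ 2) ≤ 10 * τ ^ 2 then (1:ℝ) else 0))
      ≤ 10 * Real.pi * Ssum := by
  have hsB : Summable (fun j : J => 10 * Real.pi * (1 / wt ((k:ℝ) - (j.1:ℝ)))) :=
    (summable_wt_sub k).mul_left _
  have h := tsum_dom (ι := J)
    (fun τ => F τ k θ * (if Real.sqrt ((k : ℝ) ^ 2 + θ ^ 2) ≤ 10 * τ ^ 2 then (1:ℝ) else 0))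
    (fun j τ => g k θ j τ)
    (fun j => 10 * Real.pi * (1 / wt ((k:ℝ) - (j.1:ℝ))))
    (Fchi_integrable k θ t)
    (fun τ => mul_nonneg (F_nonneg τ k θ) (chi_nonneg k θ τ))
    (fun τ _ => by
      calc F τ k θ * (if Real.sqrt ((k : ℝ) ^ 2 + θ ^ 2) ≤ 10 * τ ^ 2 then (1:ℝ) else 0)
          ≤ F τ k θ * 1 :=
            mul_le_mul_of_nonneg_left (chi_le_one k θ τ) (F_nonneg τ k θ)
      _ = F τ k θ := by ring
      _ ≤ ∑' j : J, g k θ j τ := F_le_tsum τ k θ)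
    (fun j => (g_cont k θ j).measurable)
    (fun j τ => g_nonneg k θ j τ)
    (fun j => g_integrableOn k θ j t)
    (fun j => int_g_le k θ j ht)
    hsB
  calc (∫ τ in Set.Ioc (0:ℝ) t, F τ k θ *
        (if Real.sqrt ((k : ℝ) ^ 2 + θ ^ 2) ≤ 10 * τ ^ 2 then (1:ℝ) else 0))
      ≤ ∑' j : J, 10 * Real.pi * (1 / wt ((k:ℝ) - (j.1:ℝ))) := h
  _ = 10 * Real.pi * ∑' j : J, (1 / wt ((k:ℝ) - (j.1:ℝ))) := tsum_mul_left
  _ ≤ 10 * Real.pi * Ssum := by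
      apply mul_le_mul_of_nonneg_left (tsum_wt_sub_le k)
      positivity

noncomputable def uu (k : ℤ) (η ξ : ℝ) (j : J) (τ : ℝ) : ℝ :=
  (10 / wt ((k:ℝ) - (j.1:ℝ))) * (|η - ξ| / (2 * |(j.1:ℝ)|)) *
    (1 / (1 + (η / (j.1:ℝ) - τ) ^ 2) + 1 / (1 + (ξ / (j.1:ℝ) - τ) ^ 2))

lemma uu_nonneg (k : ℤ) (η ξ : ℝ) (j : J) (τ : ℝ) : 0 ≤ uu k η ξ j τ := by
  unfold uu
  have h1 : (0:ℝ) ≤ 10 / wt ((k:ℝ) - (j.1:ℝ)) := div_nonneg (by norm_num) (wt_pos _).le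
  positivity

lemma uu_meas (k : ℤ) (η ξ : ℝ) (j : J) : Measurable (uu k η ξ j) := by
  unfold uu
  apply Measurable.mul
  · exact measurable_const
  · exact ((cauchy_cont (η / (j.1:ℝ))).add (cauchy_cont (ξ / (j.1:ℝ)))).measurable

lemma cauchy_le_one (c τ : ℝ) : 1 / (1 + (c - τ) ^ 2) ≤ 1 := by
  rw [div_le_one (by nlinarith [sq_nonneg (c - τ)])]
  nlinarith [sq_nonneg (c - τ)]

lemma cauchy_nonneg (c τ : ℝ) : 0 ≤ 1 / (1 + (c - τ) ^ 2) := by positivity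

lemma uu_le (k : ℤ) (η ξ : ℝ) (j : J) (τ : ℝ) :
    uu k η ξ j τ ≤ 10 * |η - ξ| * (1 / wt ((k:ℝ) - (j.1:ℝ))) := by
  unfold uu
  have hp1 : (1:ℝ) ≤ |(j.1:ℝ)| := int_abs_one_le j.2
  have hw := wt_pos ((k:ℝ) - (j.1:ℝ))
  have h2 : |η - ξ| / (2 * |(j.1:ℝ)|) ≤ |η - ξ| / 2 := by
    apply div_le_div_of_nonneg_left (abs_nonneg _) (by norm_num) <;> linarith
  have h3 : 1 / (1 + (η / (j.1:ℝ) - τ) ^ 2) + 1 / (1 + (ξ / (j.1:ℝ) - τ) ^ 2) ≤ 2 := by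
    linarith [cauchy_le_one (η / (j.1:ℝ)) τ, cauchy_le_one (ξ / (j.1:ℝ)) τ]
  have h4 : (0:ℝ) ≤ 10 / wt ((k:ℝ) - (j.1:ℝ)) := div_nonneg (by norm_num) hw.le
  calc (10 / wt ((k:ℝ) - (j.1:ℝ))) * (|η - ξ| / (2 * |(j.1:ℝ)|)) *
      (1 / (1 + (η / (j.1:ℝ) - τ) ^ 2) + 1 / (1 + (ξ / (j.1:ℝ) - τ) ^ 2))
      ≤ (10 / wt ((k:ℝ) - (j.1:ℝ))) * (|η - ξ| / 2) * 2 := by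
        apply mul_le_mul (mul_le_mul_of_nonneg_left h2 h4) h3
        · positivity
        · positivity
  _ = 10 * |η - ξ| * (1 / wt ((k:ℝ) - (j.1:ℝ))) := by field_simp

lemma summable_uu (k : ℤ) (η ξ : ℝ) (τ : ℝ) : Summable (fun j : J => uu k η ξ j τ) := by
  apply Summable.of_nonneg_of_le (fun j => uu_nonneg k η ξ j τ) (fun j => uu_le k η ξ j τ)
  exact (summable_wt_sub k).mul_left _

lemma g_diff_le (k : ℤ) (η ξ : ℝ) (j : J) (τ : ℝ) :
    |g k η j τ - g k ξ j τ| ≤ uu k η ξ j τ := by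
  have hw := wt_pos ((k:ℝ) - (j.1:ℝ))
  have hj : ((j.1:ℝ)) ≠ 0 := by
    exact_mod_cast j.2
  rw [g_eq_mul, g_eq_mul, ← mul_sub, abs_mul,
    abs_of_nonneg (div_nonneg (by norm_num) hw.le : (0:ℝ) ≤ 10 / wt ((k:ℝ) - (j.1:ℝ)))]
  unfold uu
  rw [mul_assoc]
  apply mul_le_mul_of_nonneg_left _ (div_nonneg (by norm_num) hw.le)
  have key := cauchy_diff (η / (j.1:ℝ) - τ) (ξ / (j.1:ℝ) - τ)
  have habs : |(η / (j.1:ℝ) - τ) - (ξ / (j.1:ℝ) - τ)| = |η - ξ| / |(j.1:ℝ)| := by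
    rw [show (η / (j.1:ℝ) - τ) - (ξ / (j.1:ℝ) - τ) = (η - ξ) / (j.1:ℝ) by field_simp; ring,
      abs_div]
  rw [habs] at key
  calc |1 / (1 + (η / (j.1:ℝ) - τ) ^ 2) - 1 / (1 + (ξ / (j.1:ℝ) - τ) ^ 2)|
      ≤ (|η - ξ| / |(j.1:ℝ)| / 2) *
        (1 / (1 + (η / (j.1:ℝ) - τ) ^ 2) + 1 / (1 + (ξ / (j.1:ℝ) - τ) ^ 2)) := key
  _ = (|η - ξ| / (2 * |(j.1:ℝ)|)) *
        (1 / (1 + (η / (j.1:ℝ) - τ) ^ 2) + 1 / (1 + (ξ / (j.1:ℝ) - τ) ^ 2)) := by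
      rw [div_div, mul_comm |(j.1:ℝ)| 2]

lemma F_diff_le (k : ℤ) (η ξ : ℝ) (τ : ℝ) :
    |F τ k η - F τ k ξ| ≤ ∑' j : J, uu k η ξ j τ := by
  rw [F_eq, F_eq]
  have hsum : Summable (fun j : J => |g k η j τ - g k ξ j τ|) :=
    Summable.of_nonneg_of_le (fun j => abs_nonneg _) (fun j => g_diff_le k η ξ j τ)
      (summable_uu k η ξ τ)
  calc |(⨆ j : J, g k η j τ) - ⨆ j : J, g k ξ j τ|
      ≤ ∑' j : J, |g k η j τ - g k ξ j τ| :=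
        abs_ciSup_diff _ _ (F_bddAbove τ k η) (F_bddAbove τ k ξ) hsum
  _ ≤ ∑' j : J, uu k η ξ j τ :=
        Summable.tsum_le_tsum (fun j => g_diff_le k η ξ j τ) hsum (summable_uu k η ξ τ)

lemma uu_integrableOn (k : ℤ) (η ξ : ℝ) (j : J) (t : ℝ) :
    IntegrableOn (uu k η ξ j) (Set.Ioc 0 t) := by
  apply integrableOn_of_bounded (vol_Ioc_ne_top t) (uu_meas k η ξ j).aestronglyMeasurable.restrict
  intro x
  rw [abs_of_nonneg (uu_nonneg k η ξ j x)]
  calc uu k η ξ j x ≤ 10 * |η - ξ| * (1 / wt ((k:ℝ) - (j.1:ℝ))) := uu_le k η ξ j x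
  _ ≤ 10 * |η - ξ| * 1 := by
      apply mul_le_mul_of_nonneg_left _ (by positivity)
      rw [div_le_one (wt_pos _)]
      exact one_le_wt _
  _ = 10 * |η - ξ| := by ring

lemma int_uu_le (k : ℤ) (η ξ : ℝ) (j : J) {t : ℝ} (ht : 0 ≤ t) :
    ∫ τ in Set.Ioc (0:ℝ) t, uu k η ξ j τ
      ≤ 10 * Real.pi * |η - ξ| * (1 / (|(j.1:ℝ)| * wt ((k:ℝ) - (j.1:ℝ)))) := by
  have hw := wt_pos ((k:ℝ) - (j.1:ℝ))
  have hp1 : (1:ℝ) ≤ |(j.1:ℝ)| := int_abs_one_le j.2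
  have hintη := cauchy_integrable (η / (j.1:ℝ)) _ (vol_Ioc_ne_top t)
  have hintξ := cauchy_integrable (ξ / (j.1:ℝ)) _ (vol_Ioc_ne_top t)
  have hc : (0:ℝ) ≤ (10 / wt ((k:ℝ) - (j.1:ℝ))) * (|η - ξ| / (2 * |(j.1:ℝ)|)) := by
    apply mul_nonneg (div_nonneg (by norm_num) hw.le)
    positivity
  calc ∫ τ in Set.Ioc (0:ℝ) t, uu k η ξ j τ
      = (10 / wt ((k:ℝ) - (j.1:ℝ))) * (|η - ξ| / (2 * |(j.1:ℝ)|)) *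
        ∫ τ in Set.Ioc (0:ℝ) t,
          (1 / (1 + (η / (j.1:ℝ) - τ) ^ 2) + 1 / (1 + (ξ / (j.1:ℝ) - τ) ^ 2)) := by
        rw [← MeasureTheory.integral_const_mul]
        rfl
  _ = (10 / wt ((k:ℝ) - (j.1:ℝ))) * (|η - ξ| / (2 * |(j.1:ℝ)|)) *
        ((∫ τ in Set.Ioc (0:ℝ) t, 1 / (1 + (η / (j.1:ℝ) - τ) ^ 2)) +
         (∫ τ in Set.Ioc (0:ℝ) t, 1 / (1 + (ξ / (j.1:ℝ) - τ) ^ 2))) := by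
        rw [integral_add hintη hintξ]
  _ ≤ (10 / wt ((k:ℝ) - (j.1:ℝ))) * (|η - ξ| / (2 * |(j.1:ℝ)|)) * (Real.pi + Real.pi) := by
        apply mul_le_mul_of_nonneg_left _ hc
        have h1 := cauchy_int_le (η / (j.1:ℝ)) t ht
        have h2 := cauchy_int_le (ξ / (j.1:ℝ)) t ht
        linarith
  _ = 10 * Real.pi * |η - ξ| * (1 / (|(j.1:ℝ)| * wt ((k:ℝ) - (j.1:ℝ)))) := by
        field_simp
        ring

lemma tsum_uu_bound {k : ℤ} (hk : k ≠ 0) (η ξ : ℝ) :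
    ∑' j : J, 10 * Real.pi * |η - ξ| * (1 / (|(j.1:ℝ)| * wt ((k:ℝ) - (j.1:ℝ))))
      ≤ 20 * Real.pi * (Ssum + Zsum) * |η - ξ| / |(k:ℝ)| := by
  have hq1 : (1:ℝ) ≤ |(k:ℝ)| := int_abs_one_le hk
  have hmaj : ∀ j : J, 10 * Real.pi * |η - ξ| * (1 / (|(j.1:ℝ)| * wt ((k:ℝ) - (j.1:ℝ))))
      ≤ 10 * Real.pi * |η - ξ| *
        (2 / |(k:ℝ)| * (1 / wt ((k:ℝ) - (j.1:ℝ)) + |(j.1:ℝ)| ^ (-(3:ℝ)))) := by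
    intro j
    apply mul_le_mul_of_nonneg_left _ (by positivity)
    rw [rpow_neg3_eq]
    exact weight_pointwise hk j.2
  have hsumMaj : Summable (fun j : J => 10 * Real.pi * |η - ξ| *
      (2 / |(k:ℝ)| * (1 / wt ((k:ℝ) - (j.1:ℝ)) + |(j.1:ℝ)| ^ (-(3:ℝ))))) := by
    apply Summable.mul_left
    apply Summable.mul_left
    exact (summable_wt_sub k).add summable_z_sub
  have hsumLHS : Summable (fun j : J =>
      10 * Real.pi * |η - ξ| * (1 / (|(j.1:ℝ)| * wt ((k:ℝ) - (j.1:ℝ))))) := by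
    apply Summable.of_nonneg_of_le _ hmaj hsumMaj
    intro j
    have := wt_pos ((k:ℝ) - (j.1:ℝ))
    have := abs_nonneg ((j.1:ℝ))
    positivity
  calc ∑' j : J, 10 * Real.pi * |η - ξ| * (1 / (|(j.1:ℝ)| * wt ((k:ℝ) - (j.1:ℝ))))
      ≤ ∑' j : J, 10 * Real.pi * |η - ξ| *
        (2 / |(k:ℝ)| * (1 / wt ((k:ℝ) - (j.1:ℝ)) + |(j.1:ℝ)| ^ (-(3:ℝ)))) :=
        Summable.tsum_le_tsum hmaj hsumLHS hsumMaj
  _ = 10 * Real.pi * |η - ξ| * (2 / |(k:ℝ)|) *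
        ∑' j : J, (1 / wt ((k:ℝ) - (j.1:ℝ)) + |(j.1:ℝ)| ^ (-(3:ℝ))) := by
        rw [← tsum_mul_left]
        apply tsum_congr; intro j; ring
  _ ≤ 10 * Real.pi * |η - ξ| * (2 / |(k:ℝ)|) * (Ssum + Zsum) := by
        apply mul_le_mul_of_nonneg_left _ (by positivity)
        rw [Summable.tsum_add (summable_wt_sub k) summable_z_sub]
        exact add_le_add (tsum_wt_sub_le k) tsum_z_sub_le
  _ = 20 * Real.pi * (Ssum + Zsum) * |η - ξ| / |(k:ℝ)| := by
        field_simp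
        ring

lemma termA {k : ℤ} (hk : k ≠ 0) (η ξ : ℝ) {t : ℝ} (ht : 0 ≤ t) :
    ∫ τ in Set.Ioc (0:ℝ) t, |F τ k η - F τ k ξ| *
      (if Real.sqrt ((k : ℝ) ^ 2 + η ^ 2) ≤ 10 * τ ^ 2 then (1:ℝ) else 0)
      ≤ 20 * Real.pi * (Ssum + Zsum) * |η - ξ| / |(k:ℝ)| := by
  have hHint : IntegrableOn (fun τ => |F τ k η - F τ k ξ| *
      (if Real.sqrt ((k : ℝ) ^ 2 + η ^ 2) ≤ 10 * τ ^ 2 then (1:ℝ) else 0)) (Set.Ioc 0 t) := by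
    apply integrableOn_of_bounded (vol_Ioc_ne_top t)
      ((((F_meas k η).sub (F_meas k ξ)).abs.mul (chi_meas k η)).aestronglyMeasurable.restrict)
    intro x
    simp only [Pi.mul_apply, Pi.abs_apply, Pi.sub_apply]
    rw [abs_mul, abs_abs, abs_of_nonneg (chi_nonneg k η x)]
    have h1 : |F x k η - F x k ξ| ≤ 20 := by
      have := F_le_ten x k η
      have := F_le_ten x k ξ
      have := F_nonneg x k η
      have := F_nonneg x k ξ
      rw [abs_le]; constructor <;> linarith
    calc |F x k η - F x k ξ| *
        (if Real.sqrt ((k : ℝ) ^ 2 + η ^ 2) ≤ 10 * x ^ 2 then (1:ℝ) else 0)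
        ≤ 20 * 1 := mul_le_mul h1 (chi_le_one k η x) (chi_nonneg k η x) (by norm_num)
    _ = 20 := by norm_num
  have h := tsum_dom (ι := J)
    (fun τ => |F τ k η - F τ k ξ| *
      (if Real.sqrt ((k : ℝ) ^ 2 + η ^ 2) ≤ 10 * τ ^ 2 then (1:ℝ) else 0))
    (uu k η ξ)
    (fun j => 10 * Real.pi * |η - ξ| * (1 / (|(j.1:ℝ)| * wt ((k:ℝ) - (j.1:ℝ)))))
    hHint
    (fun τ => mul_nonneg (abs_nonneg _) (chi_nonneg k η τ))
    (fun τ _ => by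
      calc |F τ k η - F τ k ξ| *
          (if Real.sqrt ((k : ℝ) ^ 2 + η ^ 2) ≤ 10 * τ ^ 2 then (1:ℝ) else 0)
          ≤ |F τ k η - F τ k ξ| * 1 :=
            mul_le_mul_of_nonneg_left (chi_le_one k η τ) (abs_nonneg _)
      _ = |F τ k η - F τ k ξ| := by ring
      _ ≤ ∑' j : J, uu k η ξ j τ := F_diff_le k η ξ τ)
    (fun j => uu_meas k η ξ j)
    (fun j τ => uu_nonneg k η ξ j τ)
    (fun j => uu_integrableOn k η ξ j t)
    (fun j => int_uu_le k η ξ j ht)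
    (by
      have hq1 : (1:ℝ) ≤ |(k:ℝ)| := int_abs_one_le hk
      apply Summable.of_nonneg_of_le _
        (fun j => mul_le_mul_of_nonneg_left
          (by rw [rpow_neg3_eq]; exact weight_pointwise hk j.2) (by positivity))
        ((((summable_wt_sub k).add summable_z_sub).mul_left _).mul_left _)
      intro j
      have := wt_pos ((k:ℝ) - (j.1:ℝ))
      have := abs_nonneg ((j.1:ℝ))
      positivity)
  exact le_trans h (tsum_uu_bound hk η ξ)

lemma le_of_sq_le_sq' {x y : ℝ} (hx : 0 ≤ x) (hy : 0 ≤ y) (h : x ^ 2 ≤ y ^ 2) : x ≤ y := by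
  by_contra hcon
  push_neg at hcon
  nlinarith

set_option maxHeartbeats 1000000 in
lemma termB {k : ℤ} (hk : k ≠ 0) {η ξ t : ℝ} (ht : 0 ≤ t) (hd : |η - ξ| ≤ |(k:ℝ)|) :
    ∫ τ in Set.Ioc (0:ℝ) t, F τ k ξ *
      |(if Real.sqrt ((k : ℝ) ^ 2 + η ^ 2) ≤ 10 * τ ^ 2 then (1:ℝ) else 0) -
       (if Real.sqrt ((k : ℝ) ^ 2 + ξ ^ 2) ≤ 10 * τ ^ 2 then (1:ℝ) else 0)|
      ≤ 100 * |η - ξ| / |(k:ℝ)| := by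
  set q : ℝ := |(k:ℝ)| with hq
  have hq1 : (1:ℝ) ≤ q := int_abs_one_le hk
  have hksq : (k:ℝ) ^ 2 = q ^ 2 := (sq_abs _).symm
  set rη : ℝ := Real.sqrt ((k:ℝ) ^ 2 + η ^ 2) with hrη
  set rξ : ℝ := Real.sqrt ((k:ℝ) ^ 2 + ξ ^ 2) with hrξ
  have hc0 : (0:ℝ) ≤ (k:ℝ) ^ 2 := sq_nonneg _
  have hrηq : q ≤ rη := by
    rw [hrη, hq, ← Real.sqrt_sq_eq_abs]
    exact Real.sqrt_le_sqrt (by nlinarith [sq_nonneg η])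
  have hrξq : q ≤ rξ := by
    rw [hrξ, hq, ← Real.sqrt_sq_eq_abs]
    exact Real.sqrt_le_sqrt (by nlinarith [sq_nonneg ξ])
  set Rm : ℝ := min rη rξ with hRm
  set RM : ℝ := max rη rξ with hRM
  have hRmq : q ≤ Rm := le_min hrηq hrξq
  have hRm1 : (1:ℝ) ≤ Rm := le_trans hq1 hRmq
  have hgap : RM - Rm ≤ |η - ξ| := by
    have h1 : RM - Rm = |rξ - rη| := max_sub_min_eq_abs _ _
    rw [h1, abs_sub_comm]
    exact sqrt_lip hc0
  set a : ℝ := Real.sqrt (Rm / 10) with ha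
  set b : ℝ := Real.sqrt (RM / 10) with hb
  have hapos : 0 < a := Real.sqrt_pos.2 (by linarith)
  have ha2 : a ^ 2 = Rm / 10 := Real.sq_sqrt (by linarith)
  have hab : a ≤ b := Real.sqrt_le_sqrt (by
    have := min_le_max (a := rη) (b := rξ); linarith)
  have hba : b - a ≤ |η - ξ| / (20 * a) := by
    have h1 : b - a ≤ (RM - Rm) / (20 * a) :=
      sqrt_gap (min_le_max) ha hb (by linarith) hapos
    have h2 : (RM - Rm) / (20 * a) ≤ |η - ξ| / (20 * a) :=
      (div_le_div_iff_of_pos_right (by linarith)).2 hgap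
    linarith
  -- choose the bound K on F on the critical interval
  obtain ⟨K, hK0, hKF, hKd⟩ : ∃ K : ℝ, 0 ≤ K ∧ (∀ τ, a ≤ τ → F τ k ξ ≤ K) ∧
      K * (b - a) ≤ 100 * |η - ξ| / q := by
    rcases le_or_gt Rm (q ^ 2 / 4000) with hcase | hcase
    · -- small minimal radius : F itself is small on the interval
      refine ⟨178 / Rm, div_nonneg (by norm_num) (by linarith), ?_, ?_⟩
      · intro τ hτ
        have hξa : |ξ| ≤ q * a / 8 := by
          by_contra hcon
          push_neg at hcon
          have hqa : 20 * Rm ≤ q * a := by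
            have hsq : (q * a) ^ 2 = q ^ 2 * (Rm / 10) := by rw [mul_pow, ha2]
            have h400 : (20 * Rm) ^ 2 ≤ (q * a) ^ 2 := by
              rw [hsq]
              nlinarith
            exact le_of_sq_le_sq' (by linarith) (mul_nonneg (by linarith) (by linarith)) h400
          have hξR : 5 * Rm / 2 < |ξ| := by
            calc 5 * Rm / 2 = 20 * Rm / 8 := by ring
            _ ≤ q * a / 8 := by linarith
            _ < |ξ| := hcon
          have hξrξ : |ξ| ≤ rξ := abs_le_sqrt_add hc0
          have hRmrη : Rm = rη := by
            rcases min_choice rη rξ with h | h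
            · rw [hRm]; exact h
            · exfalso
              rw [← hRm] at h
              linarith
          have hηrη : |η| ≤ rη := abs_le_sqrt_add hc0
          have hdge : |ξ| - |η| ≤ |η - ξ| := by
            rw [abs_sub_comm]
            exact abs_sub_abs_le_abs_sub _ _
          have : 3 * Rm / 2 ≤ |η - ξ| := by
            rw [← hRmrη] at hηrη
            linarith
          linarith
        have hRk3 : Rm ≤ |(k:ℝ)| ^ 3 := by
          rw [← hq]
          nlinarith
        exact F_small hk ξ τ a Rm hapos ha2 (by rw [← hq]; exact hRmq) hRk3 hξa hτ
      · -- length times K estimate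
        have hKd0 : 178 * q ≤ 2000 * (a * Rm) := by
          have h1 : (2000 * (a * Rm)) ^ 2 = 400000 * Rm ^ 3 := by
            have : (2000 * (a * Rm)) ^ 2 = 4000000 * (a ^ 2) * Rm ^ 2 := by ring
            rw [this, ha2]; ring
          have hpow : q ^ 3 ≤ Rm ^ 3 := pow_le_pow_left₀ (by linarith) hRmq 3
          have hq2 : q ^ 2 ≤ q ^ 3 := by nlinarith
          have h3 : (178 * q) ^ 2 ≤ (2000 * (a * Rm)) ^ 2 := by
            rw [h1]
            nlinarith
          exact le_of_sq_le_sq' (by linarith) (mul_nonneg (by norm_num) (mul_nonneg (by linarith) (by linarith))) h3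
        calc 178 / Rm * (b - a) ≤ 178 / Rm * (|η - ξ| / (20 * a)) := by
              apply mul_le_mul_of_nonneg_left hba (div_nonneg (by norm_num) (by linarith))
        _ ≤ 100 * |η - ξ| / q := by
              rw [div_mul_div_comm,
                div_le_div_iff₀ (mul_pos (by linarith) (by linarith)) (by linarith)]
              have hd0 : (0:ℝ) ≤ |η - ξ| := abs_nonneg _
              nlinarith [mul_le_mul_of_nonneg_left hKd0 hd0]
    · -- large minimal radius : use the trivial bound F ≤ 10
      refine ⟨10, by norm_num, fun τ _ => F_le_ten τ k ξ, ?_⟩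
      have hqa : q ≤ 200 * a := by
        have h1 : (q) ^ 2 ≤ (200 * a) ^ 2 := by
          have : (200 * a) ^ 2 = 4000 * Rm := by rw [mul_pow, ha2]; ring
          rw [this]
          linarith
        exact le_of_sq_le_sq' (by linarith) (by linarith) h1
      calc 10 * (b - a) ≤ 10 * (|η - ξ| / (20 * a)) := by
            apply mul_le_mul_of_nonneg_left hba (by norm_num)
      _ ≤ 100 * |η - ξ| / q := by
            have h9 : 10 * (|η - ξ| / (20 * a)) = 10 * |η - ξ| / (20 * a) := by ring
            rw [h9, div_le_div_iff₀ (by linarith) (by linarith)]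
            have hd0 : (0:ℝ) ≤ |η - ξ| := abs_nonneg _
            nlinarith [mul_le_mul_of_nonneg_left hqa hd0]
  -- pointwise estimate by the indicator of [a, b)
  have hpt : ∀ τ ∈ Set.Ioc (0:ℝ) t, F τ k ξ *
      |(if rη ≤ 10 * τ ^ 2 then (1:ℝ) else 0) - (if rξ ≤ 10 * τ ^ 2 then (1:ℝ) else 0)|
      ≤ (Set.Ico a b).indicator (fun _ => K) τ := by
    intro τ hτ
    have hind0 : 0 ≤ (Set.Ico a b).indicator (fun _ : ℝ => K) τ :=
      Set.indicator_nonneg (fun _ _ => hK0) τ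
    have hmem : ∀ (hlo : Rm ≤ 10 * τ ^ 2) (hhi : 10 * τ ^ 2 < RM), τ ∈ Set.Ico a b := by
      intro hlo hhi
      constructor
      · calc a = Real.sqrt (Rm / 10) := ha
        _ ≤ Real.sqrt (τ ^ 2) := Real.sqrt_le_sqrt (by linarith)
        _ = τ := Real.sqrt_sq hτ.1.le
      · calc τ = Real.sqrt (τ ^ 2) := (Real.sqrt_sq hτ.1.le).symm
        _ < Real.sqrt (RM / 10) := Real.sqrt_lt_sqrt (sq_nonneg τ) (by linarith)
        _ = b := hb.symm
    by_cases h1 : rη ≤ 10 * τ ^ 2 <;> by_cases h2 : rξ ≤ 10 * τ ^ 2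
    · simp only [if_pos h1, if_pos h2, sub_self, abs_zero, mul_zero]
      exact hind0
    · have hτm : τ ∈ Set.Ico a b := by
        apply hmem (le_trans (min_le_left _ _) h1)
        push_neg at h2
        exact lt_of_lt_of_le h2 (le_max_right _ _)
      rw [Set.indicator_of_mem hτm]
      simp only [if_pos h1, if_neg h2, sub_zero, abs_one, mul_one]
      exact hKF τ hτm.1
    · have hτm : τ ∈ Set.Ico a b := by
        apply hmem (le_trans (min_le_right _ _) h2)
        push_neg at h1
        exact lt_of_lt_of_le h1 (le_max_left _ _)
      rw [Set.indicator_of_mem hτm]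
      simp only [if_neg h1, if_pos h2, zero_sub, abs_neg, abs_one, mul_one]
      exact hKF τ hτm.1
    · simp only [if_neg h1, if_neg h2, sub_self, abs_zero, mul_zero]
      exact hind0
  -- integrate the pointwise estimate
  have hint1 : IntegrableOn (fun τ => F τ k ξ *
      |(if rη ≤ 10 * τ ^ 2 then (1:ℝ) else 0) - (if rξ ≤ 10 * τ ^ 2 then (1:ℝ) else 0)|)
      (Set.Ioc 0 t) := by
    apply integrableOn_of_bounded (vol_Ioc_ne_top t)
    · exact ((F_meas k ξ).mul (((chi_meas k η).sub (chi_meas k ξ)).abs)).aestronglyMeasurable.restrict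
    · intro x
      rw [abs_mul, abs_abs, abs_of_nonneg (F_nonneg x k ξ)]
      have h1 : |(if rη ≤ 10 * x ^ 2 then (1:ℝ) else 0) -
          (if rξ ≤ 10 * x ^ 2 then (1:ℝ) else 0)| ≤ 2 := by
        split_ifs <;> norm_num
      calc F x k ξ * |(if rη ≤ 10 * x ^ 2 then (1:ℝ) else 0) -
            (if rξ ≤ 10 * x ^ 2 then (1:ℝ) else 0)|
          ≤ 10 * 2 := mul_le_mul (F_le_ten x k ξ) h1 (abs_nonneg _) (by norm_num)
      _ = 20 := by norm_num
  have hint2 : IntegrableOn ((Set.Ico a b).indicator (fun _ => K)) (Set.Ioc 0 t) := by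
    apply integrableOn_of_bounded (vol_Ioc_ne_top t)
    · exact (measurable_const.indicator measurableSet_Ico).aestronglyMeasurable.restrict
    · intro x
      rw [Set.indicator_apply]
      split_ifs
      · rw [abs_of_nonneg hK0]
      · rw [abs_zero]; exact hK0
  have h3 : ∫ τ in Set.Ioc (0:ℝ) t, F τ k ξ *
      |(if rη ≤ 10 * τ ^ 2 then (1:ℝ) else 0) - (if rξ ≤ 10 * τ ^ 2 then (1:ℝ) else 0)|
      ≤ ∫ τ in Set.Ioc (0:ℝ) t, (Set.Ico a b).indicator (fun _ => K) τ :=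
    setIntegral_mono_on hint1 hint2 measurableSet_Ioc hpt
  have h4 : ∫ τ in Set.Ioc (0:ℝ) t, (Set.Ico a b).indicator (fun _ => K) τ ≤ K * (b - a) := by
    rw [setIntegral_indicator measurableSet_Ico, setIntegral_const]
    have h5 : (volume (Set.Ioc 0 t ∩ Set.Ico a b)).toReal ≤ b - a := by
      have h6 : volume (Set.Ioc 0 t ∩ Set.Ico a b) ≤ volume (Set.Ico a b) :=
        measure_mono Set.inter_subset_right
      have h7 : (volume (Set.Ico a b)).toReal = b - a := by
        rw [Real.volume_Ico, ENNReal.toReal_ofReal (by linarith)]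
      calc (volume (Set.Ioc 0 t ∩ Set.Ico a b)).toReal
          ≤ (volume (Set.Ico a b)).toReal :=
            ENNReal.toReal_mono (by rw [Real.volume_Ico]; exact ENNReal.ofReal_ne_top) h6
      _ = b - a := h7
    calc (volume (Set.Ioc 0 t ∩ Set.Ico a b)).toReal * K ≤ (b - a) * K :=
          mul_le_mul_of_nonneg_right h5 hK0
    _ = K * (b - a) := by ring
  calc ∫ τ in Set.Ioc (0:ℝ) t, F τ k ξ *
      |(if rη ≤ 10 * τ ^ 2 then (1:ℝ) else 0) - (if rξ ≤ 10 * τ ^ 2 then (1:ℝ) else 0)|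
      ≤ K * (b - a) := le_trans h3 h4
  _ ≤ 100 * |η - ξ| / q := hKd

lemma FchiM_integrable (k : ℤ) (θ θ' : ℝ) (t : ℝ) :
    IntegrableOn (fun τ => F τ k θ *
      (if Real.sqrt ((k : ℝ) ^ 2 + θ' ^ 2) ≤ 10 * τ ^ 2 then (1:ℝ) else 0)) (Set.Ioc 0 t) := by
  apply integrableOn_of_bounded (vol_Ioc_ne_top t)
    (((F_meas k θ).mul (chi_meas k θ')).aestronglyMeasurable.restrict)
  intro x
  rw [Pi.mul_apply, abs_mul, abs_of_nonneg (F_nonneg x k θ), abs_of_nonneg (chi_nonneg k θ' x)]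
  calc F x k θ * (if Real.sqrt ((k : ℝ) ^ 2 + θ' ^ 2) ≤ 10 * x ^ 2 then (1:ℝ) else 0)
      ≤ 10 * 1 := mul_le_mul (F_le_ten x k θ) (chi_le_one k θ' x) (chi_nonneg k θ' x) (by norm_num)
  _ = 10 := by norm_num


set_option maxHeartbeats 1000000 in
/-- Lemma 4.4 iv): the weight `m` is Lipschitz in the frequency variable `η` with
constant of order `1/|k|`. -/
theorem m_lipschitz : ∃ C : ℝ, 0 < C ∧ ∀ k : ℤ, k ≠ 0 → ∀ t : ℝ, 0 ≤ t → ∀ η ξ : ℝ,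
    |m t k η - m t k ξ| ≤ C * |η - ξ| / |(k : ℝ)| := by
  have hπ := Real.pi_pos
  have hS := one_le_Ssum
  have hZ := Zsum_nonneg
  set A : ℝ := 10 * Real.pi * Ssum with hA
  set M : ℝ := Real.exp A with hM
  have hM0 : 0 < M := Real.exp_pos A
  set c1 : ℝ := 20 * Real.pi * (Ssum + Zsum) with hc1
  have hc10 : 0 ≤ c1 := by
    rw [hc1]
    apply mul_nonneg (by linarith) (by linarith)
  refine ⟨M * (c1 + 101), by nlinarith, ?_⟩
  intro k hk t ht η ξ
  have hq1 : (1:ℝ) ≤ |(k:ℝ)| := int_abs_one_le hk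
  have hq0 : (0:ℝ) < |(k:ℝ)| := by linarith
  have hd0 : (0:ℝ) ≤ |η - ξ| := abs_nonneg _
  have hIη0 := I_nonneg (t := t) k η
  have hIξ0 := I_nonneg (t := t) k ξ
  have hIηA := I_le_A ht k η
  have hIξA := I_le_A ht k ξ
  rw [m_eq_exp ht k η, m_eq_exp ht k ξ]
  rcases le_total (|(k:ℝ)|) (|η - ξ|) with hcheap | hmain
  · -- both weights are bounded by M
    have h1 : Real.exp (∫ τ in Set.Ioc (0:ℝ) t, F τ k η *
        (if Real.sqrt ((k : ℝ) ^ 2 + η ^ 2) ≤ 10 * τ ^ 2 then (1:ℝ) else 0)) ≤ M :=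
      Real.exp_le_exp.2 hIηA
    have h2 : Real.exp (∫ τ in Set.Ioc (0:ℝ) t, F τ k ξ *
        (if Real.sqrt ((k : ℝ) ^ 2 + ξ ^ 2) ≤ 10 * τ ^ 2 then (1:ℝ) else 0)) ≤ M :=
      Real.exp_le_exp.2 hIξA
    have h3 := Real.exp_pos (∫ τ in Set.Ioc (0:ℝ) t, F τ k η *
        (if Real.sqrt ((k : ℝ) ^ 2 + η ^ 2) ≤ 10 * τ ^ 2 then (1:ℝ) else 0))
    have h4 := Real.exp_pos (∫ τ in Set.Ioc (0:ℝ) t, F τ k ξ *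
        (if Real.sqrt ((k : ℝ) ^ 2 + ξ ^ 2) ≤ 10 * τ ^ 2 then (1:ℝ) else 0))
    have h5 : |Real.exp (∫ τ in Set.Ioc (0:ℝ) t, F τ k η *
        (if Real.sqrt ((k : ℝ) ^ 2 + η ^ 2) ≤ 10 * τ ^ 2 then (1:ℝ) else 0)) -
        Real.exp (∫ τ in Set.Ioc (0:ℝ) t, F τ k ξ *
        (if Real.sqrt ((k : ℝ) ^ 2 + ξ ^ 2) ≤ 10 * τ ^ 2 then (1:ℝ) else 0))| ≤ M := by
      rw [abs_le]
      constructor <;> linarith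
    rw [le_div_iff₀ hq0]
    have h6 := mul_le_mul h5 hcheap (by linarith) hM0.le
    nlinarith [mul_nonneg (mul_nonneg hM0.le hc10) hd0]
  · -- the main Lipschitz estimate
    set χη : ℝ → ℝ := fun τ => if Real.sqrt ((k : ℝ) ^ 2 + η ^ 2) ≤ 10 * τ ^ 2 then (1:ℝ) else 0
      with hχη
    set χξ : ℝ → ℝ := fun τ => if Real.sqrt ((k : ℝ) ^ 2 + ξ ^ 2) ≤ 10 * τ ^ 2 then (1:ℝ) else 0
      with hχξ
    have hint1 : IntegrableOn (fun τ => F τ k η * χη τ) (Set.Ioc 0 t) := Fchi_integrable k η t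
    have hint2 : IntegrableOn (fun τ => F τ k ξ * χξ τ) (Set.Ioc 0 t) := Fchi_integrable k ξ t
    have hint3 : IntegrableOn (fun τ => F τ k ξ * χη τ) (Set.Ioc 0 t) := FchiM_integrable k ξ η t
    have hPint : IntegrableOn (fun τ => (F τ k η - F τ k ξ) * χη τ) (Set.Ioc 0 t) :=
      (hint1.sub hint3).congr (ae_of_all _ (fun τ => by simp only [Pi.sub_apply]; ring))
    have hQint : IntegrableOn (fun τ => F τ k ξ * (χη τ - χξ τ)) (Set.Ioc 0 t) :=
      (hint3.sub hint2).congr (ae_of_all _ (fun τ => by simp only [Pi.sub_apply]; ring))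
    have hsplit : (∫ τ in Set.Ioc (0:ℝ) t, F τ k η * χη τ) -
        (∫ τ in Set.Ioc (0:ℝ) t, F τ k ξ * χξ τ)
        = (∫ τ in Set.Ioc (0:ℝ) t, (F τ k η - F τ k ξ) * χη τ) +
          (∫ τ in Set.Ioc (0:ℝ) t, F τ k ξ * (χη τ - χξ τ)) := by
      rw [← integral_sub hint1 hint2, ← integral_add hPint hQint]
      apply setIntegral_congr_fun measurableSet_Ioc
      intro τ _
      ring
    have hP : |∫ τ in Set.Ioc (0:ℝ) t, (F τ k η - F τ k ξ) * χη τ|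
        ≤ c1 * |η - ξ| / |(k:ℝ)| := by
      calc |∫ τ in Set.Ioc (0:ℝ) t, (F τ k η - F τ k ξ) * χη τ|
          ≤ ∫ τ in Set.Ioc (0:ℝ) t, |(F τ k η - F τ k ξ) * χη τ| := by
            rw [← Real.norm_eq_abs]
            apply le_trans (MeasureTheory.norm_integral_le_integral_norm _)
            apply le_of_eq
            apply setIntegral_congr_fun measurableSet_Ioc
            intro τ _
            simp only [Real.norm_eq_abs]
      _ = ∫ τ in Set.Ioc (0:ℝ) t, |F τ k η - F τ k ξ| * χη τ := by
            apply setIntegral_congr_fun measurableSet_Ioc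
            intro τ _
            simp only [abs_mul, abs_of_nonneg (show 0 ≤ χη τ from chi_nonneg k η τ)]
      _ ≤ c1 * |η - ξ| / |(k:ℝ)| := termA hk η ξ ht
    have hQ : |∫ τ in Set.Ioc (0:ℝ) t, F τ k ξ * (χη τ - χξ τ)|
        ≤ 100 * |η - ξ| / |(k:ℝ)| := by
      calc |∫ τ in Set.Ioc (0:ℝ) t, F τ k ξ * (χη τ - χξ τ)|
          ≤ ∫ τ in Set.Ioc (0:ℝ) t, |F τ k ξ * (χη τ - χξ τ)| := by
            rw [← Real.norm_eq_abs]
            apply le_trans (MeasureTheory.norm_integral_le_integral_norm _)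
            apply le_of_eq
            apply setIntegral_congr_fun measurableSet_Ioc
            intro τ _
            simp only [Real.norm_eq_abs]
      _ = ∫ τ in Set.Ioc (0:ℝ) t, F τ k ξ * |χη τ - χξ τ| := by
            apply setIntegral_congr_fun measurableSet_Ioc
            intro τ _
            simp only [abs_mul, abs_of_nonneg (F_nonneg τ k ξ)]
      _ ≤ 100 * |η - ξ| / |(k:ℝ)| := termB hk ht hmain
    have hdiff : |(∫ τ in Set.Ioc (0:ℝ) t, F τ k η * χη τ) -
        (∫ τ in Set.Ioc (0:ℝ) t, F τ k ξ * χξ τ)|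
        ≤ (c1 + 100) * |η - ξ| / |(k:ℝ)| := by
      rw [hsplit]
      calc |(∫ τ in Set.Ioc (0:ℝ) t, (F τ k η - F τ k ξ) * χη τ) +
          (∫ τ in Set.Ioc (0:ℝ) t, F τ k ξ * (χη τ - χξ τ))|
          ≤ |∫ τ in Set.Ioc (0:ℝ) t, (F τ k η - F τ k ξ) * χη τ| +
            |∫ τ in Set.Ioc (0:ℝ) t, F τ k ξ * (χη τ - χξ τ)| := abs_add_le _ _
      _ ≤ c1 * |η - ξ| / |(k:ℝ)| + 100 * |η - ξ| / |(k:ℝ)| := add_le_add hP hQ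
      _ = (c1 + 100) * |η - ξ| / |(k:ℝ)| := by ring
    calc |Real.exp (∫ τ in Set.Ioc (0:ℝ) t, F τ k η * χη τ) -
        Real.exp (∫ τ in Set.Ioc (0:ℝ) t, F τ k ξ * χξ τ)|
        ≤ M * |(∫ τ in Set.Ioc (0:ℝ) t, F τ k η * χη τ) -
            (∫ τ in Set.Ioc (0:ℝ) t, F τ k ξ * χξ τ)| := exp_diff hIηA hIξA
    _ ≤ M * ((c1 + 100) * |η - ξ| / |(k:ℝ)|) :=
        mul_le_mul_of_nonneg_left hdiff hM0.le
    _ ≤ M * (c1 + 101) * |η - ξ| / |(k:ℝ)| := by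
        have he : M * ((c1 + 100) * |η - ξ| / |(k:ℝ)|) = M * (c1 + 100) * |η - ξ| / |(k:ℝ)| := by
          ring
        rw [he, div_le_div_iff₀ hq0 hq0]
        nlinarith [mul_nonneg hM0.le hd0]
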